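/- Let $X$ be a Banach lattice and $P\colon X\to X$ a strictly positive projection (i.e., $x>0$ implies $Px>0$). If the only closed ideals of $X$ invariant under $P$ are $\{0\}$ and $X$, then the range of $P$ is one-dimensional. -/

import Mathlib

/-!
Strict positivity makes the range of `P` a sublattice: if `P y = y`, then `P |y| - |y| ≥ 0` is
killed by `P`, hence is `0`. If `a, b > 0` were disjoint fixed points, then
`{x | P |x| ⊥ b}` would be a closed `P`-invariant ideal containing `a` but not `b`
(closed because positive operators on Banach lattices are continuous). Applied to `y⁺ ⊥ y⁻`,
irreducibility makes every fixed point `≥ 0` or `≤ 0`. Finally, if `u > 0` is a fixed point and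
`v` is another one, the closed sets `{t | t • u ≤ v}` and `{t | v ≤ t • u}` cover `ℝ` and are
non-empty by the Archimedean property, so by connectedness some `t` lies in both: `v = t • u`.
-/

open Filter Topology LatticeOrderedAddCommGroup

theorem abs_map_le_map_abs {X Y F : Type*} [AddGroup X] [Lattice X] [AddGroup Y] [Lattice Y]
    [FunLike F X Y] [AddMonoidHomClass F X Y] {f : F} (hf : Monotone f) (x : X) :
    |f x| ≤ f |x| :=
  abs_le'.2 ⟨hf (le_abs_self x), map_neg f x ▸ hf (neg_le_abs x)⟩

section LatticeOrderedGroup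

variable {X : Type*} [AddCommGroup X] [Lattice X]

theorem nonneg_of_inf_eq_zero {a b : X} (h : a ⊓ b = 0) : 0 ≤ a :=
  h ▸ inf_le_left

theorem inf_eq_zero_of_le {a b c : X} (ha : 0 ≤ a) (hab : a ≤ b) (h : b ⊓ c = 0) :
    a ⊓ c = 0 :=
  le_antisymm ((inf_le_inf_right c hab).trans h.le)
    (le_inf ha (nonneg_of_inf_eq_zero (inf_comm b c ▸ h)))

variable [IsOrderedAddMonoid X]

theorem add_inf_eq_zero {a b c : X} (ha : a ⊓ c = 0) (hb : b ⊓ c = 0) : (a + b) ⊓ c = 0 := by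
  have ha0 := nonneg_of_inf_eq_zero ha
  have hb0 := nonneg_of_inf_eq_zero hb
  have hc0 := nonneg_of_inf_eq_zero (inf_comm a c ▸ ha)
  have hle : (a + b) ⊓ c ≤ a ⊓ c + b ⊓ c := by
    rw [add_inf, inf_add, inf_add]
    refine le_inf (le_inf inf_le_left ?_) (le_inf ?_ ?_)
    · exact inf_le_right.trans (le_add_of_nonneg_right hb0)
    · exact inf_le_right.trans (le_add_of_nonneg_left ha0)
    · exact inf_le_right.trans (le_add_of_nonneg_left hc0)
  exact le_antisymm (by simpa [ha, hb] using hle) (le_inf (add_nonneg ha0 hb0) hc0)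

theorem LatticeOrderedAddCommGroup.IsSolid.mem_of_le {s : Set X} (hs : IsSolid s) {a b : X}
    (ha : 0 ≤ a) (hab : a ≤ b) (hb : b ∈ s) : a ∈ s :=
  hs hb (by rwa [abs_of_nonneg ha, abs_of_nonneg (ha.trans hab)])

end LatticeOrderedGroup

section VectorLattice

variable {X : Type*} [AddCommGroup X] [Lattice X] [Module ℝ X] [IsOrderedModule ℝ X]

theorem abs_smul_le (c : ℝ) (x : X) : |c • x| ≤ |c| • |x| := by
  have key : ∀ d : ℝ, d • x ≤ |d| • |x| := by
    intro d
    rcases le_total 0 d with hd | hd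
    · rw [abs_of_nonneg hd]
      exact smul_le_smul_of_nonneg_left (le_abs_self x) hd
    · rw [abs_of_nonpos hd, ← neg_smul_neg]
      exact smul_le_smul_of_nonneg_left (neg_le_abs x) (neg_nonneg.2 hd)
  exact abs_le'.2 ⟨key c, by simpa only [neg_smul, abs_neg] using key (-c)⟩

variable [IsOrderedAddMonoid X]

theorem smul_inf_eq_zero {t : ℝ} {u v : X} (ht : 0 ≤ t) (h : u ⊓ v = 0) : (t • u) ⊓ v = 0 := by
  have hu := nonneg_of_inf_eq_zero h
  have hv := nonneg_of_inf_eq_zero (inf_comm u v ▸ h)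
  have hd : (0 : ℝ) < max t 1 := lt_max_of_lt_right one_pos
  have hscale : (max t 1 • u) ⊓ (max t 1 • v) = 0 := by
    rw [← smul_zero (max t 1), ← h]
    exact ((OrderIso.smulRight hd).map_inf u v).symm
  refine le_antisymm ?_ (le_inf (smul_nonneg ht hu) hv)
  calc (t • u) ⊓ v ≤ (max t 1 • u) ⊓ (max t 1 • v) :=
        inf_le_inf (smul_le_smul_of_nonneg_right (le_max_left t 1) hu)
          (le_smul_of_one_le_left hv (le_max_right t 1))
    _ = 0 := hscale

def disjointComplement (b : X) : Submodule ℝ X where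
  carrier := {x | |x| ⊓ |b| = 0}
  zero_mem' := by simp
  add_mem' {x y} hx hy := inf_eq_zero_of_le (abs_nonneg _) (abs_add_le x y) (add_inf_eq_zero hx hy)
  smul_mem' c x hx := inf_eq_zero_of_le (abs_nonneg _) (abs_smul_le c x)
    (smul_inf_eq_zero (abs_nonneg c) hx)

theorem mem_disjointComplement {b x : X} : x ∈ disjointComplement b ↔ |x| ⊓ |b| = 0 := Iff.rfl

theorem isSolid_disjointComplement (b : X) : IsSolid (disjointComplement b : Set X) :=
  fun _ hx _ hyx => inf_eq_zero_of_le (abs_nonneg _) hyx hx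

def Submodule.absComap (T : X →ₗ[ℝ] X) (hT : Monotone T) (J : Submodule ℝ X)
    (hJ : IsSolid (J : Set X)) : Submodule ℝ X where
  carrier := {x | T |x| ∈ J}
  zero_mem' := by simp
  add_mem' {x y} hx hy := by
    have hle : T |x + y| ≤ T |x| + T |y| := map_add T |x| |y| ▸ hT (abs_add_le x y)
    exact hJ.mem_of_le ((monotone_iff_map_nonneg T).1 hT _ (abs_nonneg _)) hle (J.add_mem hx hy)
  smul_mem' c x hx := by
    have hle : T |c • x| ≤ |c| • T |x| := map_smul T |c| |x| ▸ hT (abs_smul_le c x)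
    exact hJ.mem_of_le ((monotone_iff_map_nonneg T).1 hT _ (abs_nonneg _)) hle (J.smul_mem _ hx)

variable {T : X →ₗ[ℝ] X} {J : Submodule ℝ X} {hJ : IsSolid (J : Set X)}

theorem Submodule.mem_absComap (hT : Monotone T) {x : X} :
    x ∈ J.absComap T hT hJ ↔ T |x| ∈ J := Iff.rfl

theorem Submodule.isSolid_absComap (hT : Monotone T) : IsSolid (J.absComap T hT hJ : Set X) :=
  fun _ hx _ hyx => hJ.mem_of_le ((monotone_iff_map_nonneg T).1 hT _ (abs_nonneg _)) (hT hyx) hx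

theorem Submodule.map_mem_absComap (hT : Monotone T) (hproj : ∀ x, T (T x) = T x) {x : X}
    (hx : x ∈ J.absComap T hT hJ) : T x ∈ J.absComap T hT hJ :=
  hJ.mem_of_le ((monotone_iff_map_nonneg T).1 hT _ (abs_nonneg _))
    (hproj |x| ▸ hT (abs_map_le_map_abs hT x)) hx

end VectorLattice

theorem inv_two_pow_smul_nonneg {X : Type*} [AddCommGroup X] [Lattice X] [IsOrderedAddMonoid X]
    [Module ℝ X] {x : X} (hx : 0 ≤ x) (k : ℕ) : 0 ≤ ((2 : ℝ) ^ k)⁻¹ • x := by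
  induction k with
  | zero => simpa using hx
  | succ k ih =>
    have h : (2 : ℝ) * ((2 : ℝ) ^ (k + 1))⁻¹ = ((2 : ℝ) ^ k)⁻¹ := by
      rw [pow_succ]
      field_simp
    refine nsmul_two_semiclosed ?_
    rwa [← Nat.cast_smul_eq_nsmul ℝ, smul_smul, Nat.cast_two, h]

section NormedLattice

variable {X : Type*} [NormedAddCommGroup X] [Lattice X] [HasSolidNorm X] [IsOrderedAddMonoid X]
  [NormedSpace ℝ X]

theorem HasSolidNorm.smul_nonneg {c : ℝ} {x : X} (hc : 0 ≤ c) (hx : 0 ≤ x) : 0 ≤ c • x := by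
  have hlim : Tendsto (fun k : ℕ => (⌊c * 2 ^ k⌋₊ / 2 ^ k : ℝ) • x) atTop (𝓝 (c • x)) :=
    ((tendsto_nat_floor_mul_div_atTop hc).comp
      (tendsto_pow_atTop_atTop_of_one_lt one_lt_two)).smul_const x
  refine ge_of_tendsto' hlim fun k => ?_
  rw [div_eq_mul_inv, mul_smul, Nat.cast_smul_eq_nsmul]
  exact nsmul_nonneg (inv_two_pow_smul_nonneg hx k) _

-- Normed lattices do not postulate compatibility of the order with real scalars; it follows from
-- the closedness of the positive cone.
instance HasSolidNorm.isOrderedModule : IsOrderedModule ℝ X :=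
  .of_smul_nonneg fun _ hc _ hx => HasSolidNorm.smul_nonneg hc hx

theorem isClosed_disjointComplement (b : X) : IsClosed (disjointComplement b : Set X) :=
  isClosed_eq ((continuous_id.sup continuous_neg).inf continuous_const) continuous_const

theorem Submodule.isClosed_absComap {T : X →ₗ[ℝ] X} (hT : Monotone T) (hTc : Continuous T)
    {J : Submodule ℝ X} {hJ : IsSolid (J : Set X)} (hJc : IsClosed (J : Set X)) :
    IsClosed (J.absComap T hT hJ : Set X) :=
  hJc.preimage (hTc.comp (continuous_id.sup continuous_neg))

variable [CompleteSpace X] {Y : Type*} [NormedAddCommGroup Y] [Lattice Y] [HasSolidNorm Y]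
  [IsOrderedAddMonoid Y] [NormedSpace ℝ Y] {T : X →ₗ[ℝ] Y}

theorem LinearMap.exists_bound_of_monotone (hT : Monotone T) :
    ∃ C, ∀ x, 0 ≤ x → ‖T x‖ ≤ C * ‖x‖ := by
  by_contra! hunb
  have hbig : ∀ n : ℕ, ∃ z, 0 ≤ z ∧ ‖z‖ ≤ (2⁻¹ : ℝ) ^ n ∧ (n : ℝ) < ‖T z‖ := by
    intro n
    obtain ⟨x, hx, hlt⟩ := hunb (n * 2 ^ n)
    have hx0 : 0 < ‖x‖ := norm_pos_iff.2 fun h => by simp [h] at hlt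
    refine ⟨(2 ^ n * ‖x‖)⁻¹ • x, smul_nonneg (by positivity) hx, ?_, ?_⟩
    · rw [norm_smul, norm_inv, norm_mul, norm_norm, norm_pow, Real.norm_two, inv_pow,
        mul_inv, mul_assoc, inv_mul_cancel₀ hx0.ne', mul_one]
    · rw [map_smul, norm_smul, norm_inv, norm_mul, norm_norm, norm_pow, Real.norm_two,
        lt_inv_mul_iff₀ (by positivity)]
      linarith
  choose z hz0 hznorm hzT using hbig
  have hsum : Summable z :=
    .of_norm_bounded (summable_geometric_of_lt_one (by norm_num) (by norm_num)) hznorm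
  obtain ⟨n, hn⟩ := exists_nat_gt ‖T (∑' k, z k)‖
  have hle : ‖T (z n)‖ ≤ ‖T (∑' k, z k)‖ := by
    refine norm_le_norm_of_abs_le_abs ?_
    rw [abs_of_nonneg ((monotone_iff_map_nonneg T).1 hT _ (hz0 n)),
      abs_of_nonneg ((monotone_iff_map_nonneg T).1 hT _ (tsum_nonneg hz0))]
    exact hT (hsum.le_tsum n fun k _ => hz0 k)
  linarith [hzT n]

theorem LinearMap.continuous_of_monotone (hT : Monotone T) : Continuous T := by
  obtain ⟨C, hC⟩ := T.exists_bound_of_monotone hT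
  refine AddMonoidHomClass.continuous_of_bound T C fun x => ?_
  calc ‖T x‖ ≤ ‖T |x|‖ := by
        refine norm_le_norm_of_abs_le_abs ?_
        rw [abs_of_nonneg ((monotone_iff_map_nonneg T).1 hT _ (abs_nonneg x))]
        exact abs_map_le_map_abs hT x
    _ ≤ C * ‖|x|‖ := hC _ (abs_nonneg x)
    _ = C * ‖x‖ := by rw [norm_abs_eq_norm]

end NormedLattice

section OrderedTopologicalVectorSpace

variable {X : Type*} [AddCommGroup X] [PartialOrder X] [Module ℝ X] [PosSMulMono ℝ X]
  [TopologicalSpace X] [ContinuousSMul ℝ X] [OrderClosedTopology X]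

theorem nonpos_of_forall_smul_le {u x : X} (h : ∀ t : ℝ, t • u ≤ x) : u ≤ 0 := by
  have hlim : Tendsto (fun t : ℝ => t⁻¹ • x) atTop (𝓝 0) := by
    simpa using (tendsto_inv_atTop_zero (𝕜 := ℝ)).smul_const x
  refine ge_of_tendsto hlim ?_
  filter_upwards [eventually_gt_atTop 0] with t ht
  calc u = t⁻¹ • (t • u) := (inv_smul_smul₀ ht.ne' u).symm
    _ ≤ t⁻¹ • x := smul_le_smul_of_nonneg_left (h t) (inv_nonneg.2 ht.le)

variable [IsOrderedAddMonoid X]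

theorem Submodule.le_span_singleton_of_nonneg_or_nonpos (V : Submodule ℝ X)
    (hV : ∀ v ∈ V, 0 ≤ v ∨ v ≤ 0) {u : X} (hu : u ∈ V) (hu0 : 0 < u) : V ≤ ℝ ∙ u := by
  intro v hv
  have hcover : ∀ t : ℝ, t • u ≤ v ∨ v ≤ t • u := fun t =>
    (hV _ (V.sub_mem hv (V.smul_mem t hu))).imp sub_nonneg.1 sub_nonpos.1
  have hbelow : ∃ t : ℝ, t • u ≤ v := by
    by_contra! h
    refine hu0.not_ge (nonpos_of_forall_smul_le (x := -v) fun t => ?_)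
    simpa [neg_smul, le_neg] using (hcover (-t)).resolve_left (h (-t))
  have habove : ∃ t : ℝ, v ≤ t • u := by
    by_contra! h
    exact hu0.not_ge (nonpos_of_forall_smul_le fun t => (hcover t).resolve_right (h t))
  have hcont : Continuous fun t : ℝ => t • u := continuous_id.smul continuous_const
  -- `ℝ` is connected and covered by the two closed sets `{t | t • u ≤ v}`, `{t | v ≤ t • u}`.
  obtain ⟨t, -, hle, hge⟩ := isPreconnected_closed_iff.1 isPreconnected_univ
    {t : ℝ | t • u ≤ v} {t : ℝ | v ≤ t • u}
    (isClosed_le hcont continuous_const) (isClosed_le continuous_const hcont)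
    (fun t _ => hcover t) (hbelow.imp fun _ h => ⟨trivial, h⟩)
    (habove.imp fun _ h => ⟨trivial, h⟩)
  exact Submodule.mem_span_singleton.2 ⟨t, le_antisymm hle hge⟩

end OrderedTopologicalVectorSpace

section StrictlyPositiveProjection

variable {X : Type*} [AddCommGroup X] [Lattice X] [IsOrderedAddMonoid X] [Module ℝ X]
  {P : X →ₗ[ℝ] X}

theorem monotone_of_map_pos (hstrict : ∀ x : X, 0 < x → 0 < P x) : Monotone P :=
  (monotone_iff_map_nonneg P).2 fun x hx =>
    hx.eq_or_lt.elim (fun h => by simp [← h]) fun h => (hstrict x h).le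

theorem map_abs_eq_of_map_eq (hproj : ∀ x, P (P x) = P x)
    (hstrict : ∀ x : X, 0 < x → 0 < P x) {y : X} (hy : P y = y) : P |y| = |y| := by
  have hd : 0 ≤ P |y| - |y| := by
    have h := abs_map_le_map_abs (monotone_of_map_pos hstrict) y
    rw [hy] at h
    exact sub_nonneg.2 h
  have hPd : P (P |y| - |y|) = 0 := by rw [map_sub, hproj, sub_self]
  by_contra hne
  exact (hstrict _ (hd.lt_of_ne (sub_ne_zero.2 hne).symm)).ne' hPd

theorem map_posPart_eq_of_map_eq (hproj : ∀ x, P (P x) = P x)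
    (hstrict : ∀ x : X, 0 < x → 0 < P x) {y : X} (hy : P y = y) : P y⁺ = y⁺ := by
  rw [posPart_def, sup_eq_half_smul_add_add_abs_sub' ℝ, zero_sub, abs_neg, add_zero, map_smul,
    map_add, hy, map_abs_eq_of_map_eq hproj hstrict hy]

theorem map_negPart_eq_of_map_eq (hproj : ∀ x, P (P x) = P x)
    (hstrict : ∀ x : X, 0 < x → 0 < P x) {y : X} (hy : P y = y) : P y⁻ = y⁻ := by
  rw [← posPart_neg]
  exact map_posPart_eq_of_map_eq hproj hstrict (by rw [map_neg, hy])

end StrictlyPositiveProjection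

section IrreducibleProjection

variable {X : Type*} [NormedAddCommGroup X] [Lattice X] [HasSolidNorm X] [IsOrderedAddMonoid X]
  [NormedSpace ℝ X] [CompleteSpace X] {P : X →ₗ[ℝ] X}

theorem inf_ne_zero_of_map_eq (hproj : ∀ x, P (P x) = P x)
    (hstrict : ∀ x : X, 0 < x → 0 < P x)
    (htriv : ∀ I : Submodule ℝ X, (∀ x y : X, |x| ≤ |y| → y ∈ I → x ∈ I) →
      IsClosed (I : Set X) → (∀ x ∈ I, P x ∈ I) → I = ⊥ ∨ I = ⊤)
    {a b : X} (ha : P a = a) (hb : P b = b) (ha0 : 0 < a) (hb0 : 0 < b) : a ⊓ b ≠ 0 := by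
  intro hab
  have hP := monotone_of_map_pos hstrict
  let I := (disjointComplement b).absComap P hP (isSolid_disjointComplement b)
  have haI : a ∈ I := by
    rwa [Submodule.mem_absComap, abs_of_nonneg ha0.le, ha, mem_disjointComplement,
      abs_of_nonneg ha0.le, abs_of_nonneg hb0.le]
  have hbI : b ∉ I := by
    rw [Submodule.mem_absComap, abs_of_nonneg hb0.le, hb, mem_disjointComplement,
      abs_of_nonneg hb0.le, inf_idem]
    exact hb0.ne'
  rcases htriv I (fun x y hxy hy => Submodule.isSolid_absComap hP hy hxy)
      (Submodule.isClosed_absComap hP (P.continuous_of_monotone hP)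
        (isClosed_disjointComplement b))
      (fun x hx => Submodule.map_mem_absComap hP hproj hx) with hI | hI
  · exact ha0.ne' ((Submodule.mem_bot ℝ).1 (hI ▸ haI))
  · exact hbI (hI ▸ Submodule.mem_top)

theorem nonneg_or_nonpos_of_map_eq (hproj : ∀ x, P (P x) = P x)
    (hstrict : ∀ x : X, 0 < x → 0 < P x)
    (htriv : ∀ I : Submodule ℝ X, (∀ x y : X, |x| ≤ |y| → y ∈ I → x ∈ I) →
      IsClosed (I : Set X) → (∀ x ∈ I, P x ∈ I) → I = ⊥ ∨ I = ⊤)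
    {y : X} (hy : P y = y) : 0 ≤ y ∨ y ≤ 0 := by
  by_contra! h
  exact inf_ne_zero_of_map_eq hproj hstrict htriv (map_posPart_eq_of_map_eq hproj hstrict hy)
    (map_negPart_eq_of_map_eq hproj hstrict hy)
    (lt_of_le_of_ne' (posPart_nonneg y) (mt posPart_eq_zero.1 h.2))
    (lt_of_le_of_ne' (negPart_nonneg y) (mt negPart_eq_zero.1 h.1))
    (posPart_inf_negPart_eq_zero y)

end IrreducibleProjection

/-- A strictly positive projection on a (non-zero) Banach lattice whose only
invariant closed ideals are `{0}` and `X` has one-dimensional range. -/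
theorem stmt3 {X : Type*} [NormedAddCommGroup X] [Lattice X] [HasSolidNorm X]
    [IsOrderedAddMonoid X] [NormedSpace ℝ X]
    [CompleteSpace X] [Nontrivial X]
    (P : X →ₗ[ℝ] X) (hproj : ∀ x, P (P x) = P x)
    (hstrict : ∀ x : X, 0 < x → 0 < P x)
    (htriv : ∀ I : Submodule ℝ X,
      (∀ x y : X, |x| ≤ |y| → y ∈ I → x ∈ I) →
      IsClosed (I : Set X) → (∀ x ∈ I, P x ∈ I) → I = ⊥ ∨ I = ⊤) :
    Module.rank ℝ (LinearMap.range P) = 1 := by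
  obtain ⟨x, hx⟩ := exists_ne (0 : X)
  have hu : 0 < P |x| := hstrict _ (lt_of_le_of_ne (abs_nonneg x) fun h =>
    hx (norm_eq_zero.1 (by rw [← norm_abs_eq_norm, ← h, norm_zero])))
  have hrange : LinearMap.range P = ℝ ∙ P |x| := by
    refine le_antisymm ?_ ((Submodule.span_singleton_le_iff_mem _ _).2 ⟨|x|, rfl⟩)
    refine (LinearMap.range P).le_span_singleton_of_nonneg_or_nonpos ?_ ⟨|x|, rfl⟩ hu
    rintro _ ⟨z, rfl⟩
    exact nonneg_or_nonpos_of_map_eq hproj hstrict htriv (hproj z)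
  rw [hrange, Module.rank_eq_one_iff_finrank_eq_one]
  exact finrank_span_singleton hu.ne'
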